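/- arXiv:2209.14460 — 2 statements merged into one kernel-verified Lean document; each statement's English description precedes it below -/
import Mathlib

section
/- For a finite discrete random loss L taking values L_s with probabilities ρ_s > 0 summing to 1, and confidence level α ∈ (0,1), the Rockafellar–Uryasev objective ζ + (1/(1-α)) Σ_s ρ_s max(L_s - ζ, 0) is minimized over ζ ∈ ℝ at ζ equal to some value of L (i.e., the minimum is attained). -/
/-- Rockafellar–Uryasev objective for a finite discrete loss. -/
noncomputable def RUobj {n : ℕ} (ρ L : Fin n → ℝ) (α : ℝ) (ζ : ℝ) : ℝ :=
  ζ + (1 - α)⁻¹ * ∑ s, ρ s * max (L s - ζ) 0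

theorem stmt_0 {n : ℕ} (hn : 0 < n) (ρ L : Fin n → ℝ)
    (hρ : ∀ s, 0 < ρ s) (hsum : ∑ s, ρ s = 1)
    (α : ℝ) (hα : α ∈ Set.Ioo (0 : ℝ) 1) :
    ∃ s₀ : Fin n, ∀ ζ : ℝ, RUobj ρ L α (L s₀) ≤ RUobj ρ L α ζ := by
  obtain ⟨hα0, hα1⟩ := hα
  have hne : (Finset.univ : Finset (Fin n)).Nonempty := ⟨⟨0, hn⟩, Finset.mem_univ _⟩
  have hc : 0 < 1 - α := by linarith
  have hc1 : 1 < (1 - α)⁻¹ := by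
    rw [lt_inv_comm₀ one_pos hc]
    simpa using hα0
  have key : ∀ ζ : ℝ, ∃ s, RUobj ρ L α (L s) ≤ RUobj ρ L α ζ := by
    intro ζ
    by_cases hex : ∃ s, L s = ζ
    · obtain ⟨s, hs⟩ := hex
      exact ⟨s, by rw [hs]⟩
    push_neg at hex
    by_cases hT : (Finset.univ.filter (fun s => ζ < L s)).Nonempty
    · by_cases hS : (Finset.univ.filter (fun s => L s < ζ)).Nonempty
      · -- ζ strictly between two values of L
        obtain ⟨sa, hsaS, hsa⟩ := Finset.exists_max_image _ L hS
        obtain ⟨sb, hsbT, hsb⟩ := Finset.exists_min_image _ L hT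
        have haζ : L sa < ζ := (Finset.mem_filter.mp hsaS).2
        have hζb : ζ < L sb := (Finset.mem_filter.mp hsbT).2
        have hab : L sa < L sb := haζ.trans hζb
        set t : ℝ := (ζ - L sa) / (L sb - L sa) with ht
        have hden : 0 < L sb - L sa := by linarith
        have ht0 : 0 < t := div_pos (by linarith) hden
        have ht1 : t < 1 := (div_lt_one hden).mpr (by linarith)
        have hζeq : ζ = (1 - t) * L sa + t * L sb := by
          field_simp [ht]
          have h' : t * (L sb - L sa) = ζ - L sa := div_mul_cancel₀ _ hden.ne'
          linear_combination -h'
        have hterm : ∀ s, max (L s - ζ) 0 =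
            (1 - t) * max (L s - L sa) 0 + t * max (L s - L sb) 0 := by
          intro s
          rcases lt_or_gt_of_ne (hex s) with h | h
          · -- L s < ζ, hence L s ≤ L sa
            have hLa : L s ≤ L sa := hsa s (Finset.mem_filter.mpr ⟨Finset.mem_univ s, h⟩)
            rw [max_eq_right (by linarith), max_eq_right (by linarith),
              max_eq_right (by linarith)]
            ring
          · -- ζ < L s, hence L sb ≤ L s
            have hLb : L sb ≤ L s := hsb s (Finset.mem_filter.mpr ⟨Finset.mem_univ s, h⟩)
            rw [max_eq_left (by linarith), max_eq_left (by linarith),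
              max_eq_left (by linarith)]
            linear_combination -hζeq
        have hsum_eq : ∑ s, ρ s * max (L s - ζ) 0 =
            (1 - t) * ∑ s, ρ s * max (L s - L sa) 0 +
            t * ∑ s, ρ s * max (L s - L sb) 0 := by
          rw [Finset.mul_sum, Finset.mul_sum, ← Finset.sum_add_distrib]
          exact Finset.sum_congr rfl fun s _ => by rw [hterm s]; ring
        have hFζ : RUobj ρ L α ζ =
            (1 - t) * RUobj ρ L α (L sa) + t * RUobj ρ L α (L sb) := by
          simp only [RUobj]
          rw [hsum_eq]
          linear_combination hζeq
        rcases le_total (RUobj ρ L α (L sa)) (RUobj ρ L α (L sb)) with h | h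
        · exact ⟨sa, by rw [hFζ]; nlinarith⟩
        · exact ⟨sb, by rw [hFζ]; nlinarith⟩
      · -- all L s > ζ
        have hall : ∀ s, ζ < L s := by
          intro s
          rcases lt_or_gt_of_ne (hex s) with h | h
          · exact absurd ⟨s, Finset.mem_filter.mpr ⟨Finset.mem_univ s, h⟩⟩ hS
          · exact h
        obtain ⟨smin, _, hsmin⟩ := Finset.exists_min_image Finset.univ L hne
        have e1 : ∀ ζ' : ℝ, (∀ s, ζ' ≤ L s) →
            RUobj ρ L α ζ' = ζ' + (1 - α)⁻¹ * ((∑ s, ρ s * L s) - ζ') := by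
          intro ζ' h
          simp only [RUobj]
          congr 1
          congr 1
          rw [show (∑ s, ρ s * L s) - ζ' = ∑ s, (ρ s * L s - ρ s * ζ') by
            rw [Finset.sum_sub_distrib, ← Finset.sum_mul, hsum, one_mul]]
          exact Finset.sum_congr rfl fun s _ => by
            rw [max_eq_left (by linarith [h s])]; ring
        have hζmin : ζ < L smin := hall smin
        refine ⟨smin, ?_⟩
        rw [e1 ζ (fun s => (hall s).le),
          e1 (L smin) (fun s => hsmin s (Finset.mem_univ s))]
        nlinarith
    · -- all L s < ζ
      have hall : ∀ s, L s < ζ := by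
        intro s
        rcases lt_or_gt_of_ne (hex s) with h | h
        · exact h
        · exact absurd ⟨s, Finset.mem_filter.mpr ⟨Finset.mem_univ s, h⟩⟩ hT
      obtain ⟨smax, _, hsmax⟩ := Finset.exists_max_image Finset.univ L hne
      have e1 : ∀ ζ' : ℝ, (∀ s, L s ≤ ζ') → RUobj ρ L α ζ' = ζ' := by
        intro ζ' h
        simp only [RUobj]
        rw [Finset.sum_congr rfl fun s _ => by
          rw [max_eq_right (by linarith [h s]), mul_zero]]
        simp
      refine ⟨smax, ?_⟩
      rw [e1 ζ (fun s => (hall s).le),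
        e1 (L smax) (fun s => hsmax s (Finset.mem_univ s))]
      exact (hall smax).le
  obtain ⟨s₀, _, hs₀⟩ := Finset.exists_min_image Finset.univ
    (fun s => RUobj ρ L α (L s)) hne
  refine ⟨s₀, fun ζ => ?_⟩
  obtain ⟨s, hs⟩ := key ζ
  exact le_trans (hs₀ s (Finset.mem_univ s)) hs
end

section
/- CVaR is subadditive on finite scenario spaces: CVaR_α(L + L') ≤ CVaR_α(L) + CVaR_α(L') where (L + L')_s = L_s + L'_s and CVaR_α is given by the Rockafellar–Uryasev infimum formula. -/
lemma cvar_bdd {n : ℕ} (ρ x : Fin n → ℝ) (hρ : ∀ s, 0 ≤ ρ s) (hsum : ∑ s, ρ s = 1)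
    (c : ℝ) (hc : 1 ≤ c) (ζ : ℝ) :
    ∑ s, ρ s * x s ≤ ζ + c * ∑ s, ρ s * max (x s - ζ) 0 := by
  have hS0 : (0:ℝ) ≤ ∑ s, ρ s * max (x s - ζ) 0 :=
    Finset.sum_nonneg fun s _ => mul_nonneg (hρ s) (le_max_right _ _)
  have hS1 : ∑ s, ρ s * (x s - ζ) ≤ ∑ s, ρ s * max (x s - ζ) 0 :=
    Finset.sum_le_sum fun s _ => mul_le_mul_of_nonneg_left (le_max_left _ _) (hρ s)
  have h2 : ∑ s, ρ s * (x s - ζ) = ∑ s, ρ s * x s - ζ := by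
    simp [mul_sub, Finset.sum_sub_distrib, ← Finset.sum_mul, hsum]
  rw [h2] at hS1
  nlinarith [mul_le_mul_of_nonneg_right hc hS0]

theorem stmt_6 {n : ℕ} (ρ L L' : Fin n → ℝ)
    (hρ : ∀ s, 0 ≤ ρ s) (hsum : ∑ s, ρ s = 1)
    (α : ℝ) (hα : α ∈ Set.Ioo (0 : ℝ) 1) :
    (⨅ ζ : ℝ, (ζ + (1 - α)⁻¹ * ∑ s, ρ s * max (L s + L' s - ζ) 0)) ≤
      (⨅ ζ : ℝ, (ζ + (1 - α)⁻¹ * ∑ s, ρ s * max (L s - ζ) 0)) +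
      (⨅ ζ : ℝ, (ζ + (1 - α)⁻¹ * ∑ s, ρ s * max (L' s - ζ) 0)) := by
  obtain ⟨hα0, hα1⟩ := hα
  have hc1 : (1:ℝ) ≤ (1 - α)⁻¹ := by
    rw [le_inv_comm₀] <;> simp <;> linarith
  have hc0 : (0:ℝ) ≤ (1 - α)⁻¹ := by linarith
  set c : ℝ := (1 - α)⁻¹
  set f : ℝ → ℝ := fun ζ => ζ + c * ∑ s, ρ s * max (L s + L' s - ζ) 0 with hf
  have hbdd : BddBelow (Set.range f) :=
    ⟨∑ s, ρ s * (L s + L' s), by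
      rintro y ⟨ζ, rfl⟩
      exact cvar_bdd ρ (fun s => L s + L' s) hρ hsum c hc1 ζ⟩
  have key : ∀ ζ1 ζ2 : ℝ,
      (⨅ ζ : ℝ, f ζ) ≤ (ζ1 + c * ∑ s, ρ s * max (L s - ζ1) 0) +
        (ζ2 + c * ∑ s, ρ s * max (L' s - ζ2) 0) := by
    intro ζ1 ζ2
    refine le_trans (ciInf_le hbdd (ζ1 + ζ2)) ?_
    have hmax : ∑ s, ρ s * max (L s + L' s - (ζ1 + ζ2)) 0 ≤
        ∑ s, ρ s * max (L s - ζ1) 0 + ∑ s, ρ s * max (L' s - ζ2) 0 := by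
      rw [← Finset.sum_add_distrib]
      refine Finset.sum_le_sum fun s _ => ?_
      rw [← mul_add]
      refine mul_le_mul_of_nonneg_left (max_le ?_ ?_) (hρ s)
      · linarith [le_max_left (L s - ζ1) 0, le_max_left (L' s - ζ2) 0]
      · exact add_nonneg (le_max_right _ _) (le_max_right _ _)
    have h3 := mul_le_mul_of_nonneg_left hmax hc0
    rw [mul_add] at h3
    have e : f (ζ1 + ζ2) = ζ1 + ζ2 + c * ∑ s, ρ s * max (L s + L' s - (ζ1 + ζ2)) 0 := rfl
    rw [e]; linarith
  have step1 : ∀ ζ1 : ℝ, (⨅ ζ : ℝ, f ζ) - (ζ1 + c * ∑ s, ρ s * max (L s - ζ1) 0) ≤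
      ⨅ ζ : ℝ, (ζ + c * ∑ s, ρ s * max (L' s - ζ) 0) := by
    intro ζ1
    exact le_ciInf fun ζ2 => by linarith [key ζ1 ζ2]
  have step2 : (⨅ ζ : ℝ, f ζ) - (⨅ ζ : ℝ, (ζ + c * ∑ s, ρ s * max (L' s - ζ) 0)) ≤
      ⨅ ζ : ℝ, (ζ + c * ∑ s, ρ s * max (L s - ζ) 0) :=
    le_ciInf fun ζ1 => by linarith [step1 ζ1]
  have e2 : iInf f = ⨅ ζ : ℝ, f ζ := rfl
  linarith [step2, e2.ge, e2.le]
end
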